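/- Let R = R₁ × ⋯ × R_n be a finite direct product of rings. Then the set of strongly left localizable elements satisfies L^s_l(R) = L^s_l(R₁) × ⋯ × L^s_l(R_n). -/
import Mathlib


/-- A left Ore set in a ring `R`: a multiplicative subset (`1 ∈ S`, `0 ∉ S`,
closed under multiplication) satisfying the left Ore condition. -/
def IsLeftOreSet (R : Type*) [Ring R] (S : Set R) : Prop :=
  (1 : R) ∈ S ∧ (0 : R) ∉ S ∧ (∀ s ∈ S, ∀ t ∈ S, s * t ∈ S) ∧
    ∀ (r : R), ∀ s ∈ S, ∃ s' ∈ S, ∃ r' : R, s' * r = r' * s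

/-- A left denominator set: a left Ore set such that `r * s = 0` implies
`t * r = 0` for some `t ∈ S`. -/
def IsLeftDenSet (R : Type*) [Ring R] (S : Set R) : Prop :=
  IsLeftOreSet R S ∧ ∀ (r : R), ∀ s ∈ S, r * s = 0 → ∃ t ∈ S, t * r = 0

/-- `ass(S) = {r ∈ R | s r = 0 for some s ∈ S}`. -/
def assSet (R : Type*) [Ring R] (S : Set R) : Set R :=
  {r : R | ∃ s ∈ S, s * r = 0}

/-- A maximal left denominator set of `R`. -/
def IsMaxLeftDenSet (R : Type*) [Ring R] (S : Set R) : Prop :=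
  IsLeftDenSet R S ∧ ∀ T : Set R, IsLeftDenSet R T → S ⊆ T → T = S

/-- The set `L^s_l(R)` of strongly left localizable elements: the intersection of
all maximal left denominator sets of `R`. -/
def stronglyLocalizable (R : Type*) [Ring R] : Set R :=
  {r : R | ∀ S : Set R, IsMaxLeftDenSet R S → r ∈ S}

/-- `T_l(R)`: the union of all left denominator sets contained in `L^s_l(R)`
(the largest strong left denominator set). -/
def Tl (R : Type*) [Ring R] : Set R :=
  ⋃₀ {S : Set R | IsLeftDenSet R S ∧ S ⊆ stronglyLocalizable R}

/-- The left localization radical `l_R = ⋂_{S ∈ max.Den_l(R)} ass(S)`. -/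
def lRad (R : Type*) [Ring R] : Set R :=
  {r : R | ∀ S : Set R, IsMaxLeftDenSet R S → r ∈ assSet R S}

/-- `f : R →+* Q` is a left Ore localization of `R` at `S`: elements of `S` become
units, every element of `Q` is of the form `s⁻¹ r`, and `ker f = ass(S)`. -/
def IsLeftLocalization (R : Type*) [Ring R] {Q : Type*} [Ring Q]
    (S : Set R) (f : R →+* Q) : Prop :=
  (∀ s ∈ S, IsUnit (f s)) ∧
  (∀ q : Q, ∃ s ∈ S, ∃ r : R, ∃ u : Qˣ, (u : Q) = f s ∧ q = (↑u⁻¹ : Q) * f r) ∧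
  (∀ r : R, f r = 0 ↔ r ∈ assSet R S)

section Aux

variable {R : Type*} [Ring R]

/-- `assSet` is closed under addition for a denominator set. -/
lemma assSet_add {S : Set R} (hS : IsLeftDenSet R S) {a b : R}
    (ha : a ∈ assSet R S) (hb : b ∈ assSet R S) : a + b ∈ assSet R S := by
  obtain ⟨s, hs, hsa⟩ := ha
  obtain ⟨t, ht, htb⟩ := hb
  obtain ⟨u, hu, c, huc⟩ := hS.1.2.2.2 t s hs
  refine ⟨u * t, hS.1.2.2.1 u hu t ht, ?_⟩
  rw [mul_add, mul_assoc u t b, htb, mul_zero, add_zero, huc, mul_assoc, hsa, mul_zero]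

lemma assSet_zero {S : Set R} (hS : IsLeftDenSet R S) : (0 : R) ∈ assSet R S :=
  ⟨1, hS.1.1, mul_zero 1⟩

/-- Every denominator set is contained in a maximal one. -/
lemma exists_max_den {S : Set R} (hS : IsLeftDenSet R S) :
    ∃ M : Set R, S ⊆ M ∧ IsMaxLeftDenSet R M := by
  obtain ⟨m, hSm, hm⟩ := zorn_subset_nonempty {T : Set R | IsLeftDenSet R T}
    (fun c hc hchain hcne => by
      obtain ⟨A, hA⟩ := hcne
      refine ⟨⋃₀ c, ⟨⟨⟨A, hA, (hc hA).1.1⟩, ?_, ?_, ?_⟩, ?_⟩, fun s hs => Set.subset_sUnion_of_mem hs⟩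
      · rintro ⟨B, hB, h0⟩
        exact (hc hB).1.2.1 h0
      · rintro s ⟨B, hB, hsB⟩ t ⟨C, hC, htC⟩
        rcases hchain.total hB hC with h | h
        · exact ⟨C, hC, (hc hC).1.2.2.1 s (h hsB) t htC⟩
        · exact ⟨B, hB, (hc hB).1.2.2.1 s hsB t (h htC)⟩
      · rintro r s ⟨B, hB, hsB⟩
        obtain ⟨s', hs', r', h⟩ := (hc hB).1.2.2.2 r s hsB
        exact ⟨s', ⟨B, hB, hs'⟩, r', h⟩
      · rintro r s ⟨B, hB, hsB⟩ hrs
        obtain ⟨t, ht, h⟩ := (hc hB).2 r s hsB hrs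
        exact ⟨t, ⟨B, hB, ht⟩, h⟩) S hS
  exact ⟨m, hSm, hm.1, fun T hT hmT => (hm.2 hT hmT).antisymm hmT⟩

end Aux

section Prod

variable {n : ℕ} {Rs : Fin n → Type*} [∀ i, Ring (Rs i)]

/-- The product set `R₁ × ⋯ × Sᵢ × ⋯ × Rₙ` is a denominator set. -/
lemma prod_den {i : Fin n} {S : Set (Rs i)} (hS : IsLeftDenSet (Rs i) S) :
    IsLeftDenSet (∀ j, Rs j) {x | x i ∈ S} := by
  refine ⟨⟨hS.1.1, fun h0 => hS.1.2.1 h0, fun s hs t ht => hS.1.2.2.1 _ hs _ ht, ?_⟩, ?_⟩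
  · intro r s hs
    obtain ⟨s', hs', r', h⟩ := hS.1.2.2.2 (r i) (s i) hs
    refine ⟨Pi.single i s', by simp [Set.mem_setOf_eq, Pi.single_eq_same, hs'],
      Pi.single i r', funext fun j => ?_⟩
    by_cases hj : j = i
    · subst hj; simpa using h
    · simp [Pi.mul_apply, Pi.single_eq_of_ne hj]
  · intro r s hs hrs
    have : r i * s i = 0 := by
      have := congrFun hrs i; simpa using this
    obtain ⟨t, ht, h⟩ := hS.2 (r i) (s i) hs this
    refine ⟨Pi.single i t, by simpa using ht, funext fun j => ?_⟩
    by_cases hj : j = i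
    · subst hj; simpa using h
    · simp [Pi.mul_apply, Pi.single_eq_of_ne hj]

/-- Projection of a denominator set is a denominator set, provided no element
has vanishing `i`-th component. -/
lemma proj_den {i : Fin n} {U : Set (∀ j, Rs j)} (hU : IsLeftDenSet (∀ j, Rs j) U)
    (h0 : ∀ u ∈ U, u i ≠ 0) :
    IsLeftDenSet (Rs i) ((fun x => x i) '' U) := by
  refine ⟨⟨⟨1, hU.1.1, rfl⟩, ?_, ?_, ?_⟩, ?_⟩
  · rintro ⟨u, hu, hui⟩
    exact h0 u hu hui
  · rintro s ⟨u, hu, rfl⟩ t ⟨v, hv, rfl⟩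
    exact ⟨u * v, hU.1.2.2.1 u hu v hv, rfl⟩
  · rintro r s ⟨u, hu, rfl⟩
    obtain ⟨s', hs', r', h⟩ := hU.1.2.2.2 (Pi.single i r) u hu
    refine ⟨s' i, ⟨s', hs', rfl⟩, r' i, ?_⟩
    have := congrFun h i
    simpa using this
  · rintro r s ⟨u, hu, rfl⟩ hrs
    have hru : Pi.single i r * u = 0 := funext fun j => by
      by_cases hj : j = i
      · subst hj; simpa using hrs
      · simp [Pi.mul_apply, Pi.single_eq_of_ne hj]
    obtain ⟨t, ht, h⟩ := hU.2 (Pi.single i r) u hu hru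
    refine ⟨t i, ⟨t, ht, rfl⟩, ?_⟩
    have := congrFun h i
    simpa using this

/-- Product with a maximal denominator set is maximal. -/
lemma prod_max {i : Fin n} {S : Set (Rs i)} (hS : IsMaxLeftDenSet (Rs i) S) :
    IsMaxLeftDenSet (∀ j, Rs j) {x | x i ∈ S} := by
  refine ⟨prod_den hS.1, fun U hU hTU => ?_⟩
  have hei : (Pi.single i 1 : ∀ j, Rs j) ∈ U := hTU (by simp [Set.mem_setOf_eq, hS.1.1.1])
  have h0 : ∀ u ∈ U, u i ≠ 0 := by
    intro u hu hui
    apply hU.1.2.1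
    have : u * Pi.single i 1 = 0 := funext fun j => by
      by_cases hj : j = i
      · subst hj; simpa using hui
      · simp [Pi.mul_apply, Pi.single_eq_of_ne hj]
    rw [← this]
    exact hU.1.2.2.1 u hu _ hei
  have hproj : (fun x => x i) '' U = S := by
    apply hS.2 _ (proj_den hU h0)
    intro s hs
    exact ⟨Function.update 1 i s, hTU (by simp [Set.mem_setOf_eq, hs]), by simp⟩
  apply Set.Subset.antisymm _ hTU
  intro u hu
  show u i ∈ S
  rw [← hproj]
  exact ⟨u, hu, rfl⟩

end Prod

theorem stmt15.{u} (n : ℕ) (Rs : Fin n → Type u) [∀ i, Ring (Rs i)] :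
    stronglyLocalizable (∀ i, Rs i) =
      {x : ∀ i, Rs i | ∀ i, x i ∈ stronglyLocalizable (Rs i)} := by
  ext x
  constructor
  · intro hx i S hS
    exact hx {y | y i ∈ S} (prod_max hS)
  · intro hx S hS
    -- find i with e_i ∉ ass(S)
    have hone : ∃ i, (Pi.single i 1 : ∀ j, Rs j) ∉ assSet (∀ j, Rs j) S := by
      by_contra h
      push_neg at h
      have h1 : (1 : ∀ j, Rs j) ∈ assSet (∀ j, Rs j) S := by
        have hsum : (∑ i, Pi.single i (1 : Rs i)) = (1 : ∀ j, Rs j) :=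
          Finset.univ_sum_single (1 : ∀ j, Rs j)
        rw [← hsum]
        exact Finset.sum_induction _ _ (fun a b => assSet_add hS.1)
          (assSet_zero hS.1) (fun i _ => h i)
      obtain ⟨s, hs, hs1⟩ := h1
      rw [mul_one] at hs1
      exact hS.1.1.2.1 (hs1 ▸ hs)
    obtain ⟨i, hi⟩ := hone
    have h0 : ∀ u ∈ S, u i ≠ 0 := by
      intro u hu hui
      apply hi
      refine ⟨u, hu, funext fun j => ?_⟩
      by_cases hj : j = i
      · subst hj; simpa using hui
      · simp [Pi.mul_apply, Pi.single_eq_of_ne hj]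
    obtain ⟨M, hSM, hM⟩ := exists_max_den (proj_den hS.1 h0)
    have hT : IsLeftDenSet (∀ j, Rs j) {y | y i ∈ M} := prod_den hM.1
    have hTS : {y : ∀ j, Rs j | y i ∈ M} = S :=
      hS.2 _ hT (fun s hs => hSM ⟨s, hs, rfl⟩)
    rw [← hTS]
    exact hx i M hM
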